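/- Let N ≥ 1, let S be a set of vectors in Fin N → ℝ, and let x ∈ S be lexicographically minimax optimal in S, i.e., x↓ ≤ y↓ in the lexicographic order for every y ∈ S, where v↓ denotes v sorted in nonincreasing order. Then x is Pareto optimal in S: there is no y ∈ S with y_n ≤ x_n for all n and y ≠ x. -/

import Mathlib

/-!
If `y ≤ x` pointwise then `y↓ ≤ x↓` pointwise, since sorting is monotone. If moreover `y ≠ x`,
then `∑ y < ∑ x`, and sorting preserves sums, so `y↓ ≠ x↓`; hence `y↓ < x↓` in the product
order, which refines to `y↓ < x↓` lexicographically, contradicting the optimality of `x`.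
-/

/-- `sortDesc v` is `v` with its components rearranged in nonincreasing order:
its `j`-th component is the `j`-th largest component of `v`. -/
noncomputable def sortDesc {N : ℕ} (v : Fin N → ℝ) : Fin N → ℝ :=
  fun j => v (Tuple.sort v (Fin.rev j))

open Finset

lemma Equiv.Perm.card_filter_comp {ι : Type*} [Fintype ι] (σ : Equiv.Perm ι) (p : ι → Prop)
    [DecidablePred p] : #{i | p (σ i)} = #{i | p i} := by
  simp only [card_filter]
  exact Equiv.sum_comp σ (fun i => if p i then 1 else 0)

namespace Tuple

variable {n : ℕ} {α : Type*} [LinearOrder α]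

/-- The `j`-th smallest entry is read off from how many entries lie below a threshold. -/
lemma comp_sort_mono {f g : Fin n → α} (h : f ≤ g) : f ∘ sort f ≤ g ∘ sort g := by
  intro j
  set a := (g ∘ sort g) j
  have hg : (j : ℕ) < #{i | g i ≤ a} := by
    rw [← (sort g).card_filter_comp (g · ≤ a)]
    exact (lt_card_le_iff_apply_le_of_monotone (monotone_sort g)).2 le_rfl
  have hgf : #{i | g i ≤ a} ≤ #{i | f i ≤ a} :=
    card_le_card (monotone_filter_right _ fun i _ => (h i).trans)
  have hf : (j : ℕ) < #{i | f (sort f i) ≤ a} := by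
    rw [(sort f).card_filter_comp (f · ≤ a)]
    omega
  exact (lt_card_le_iff_apply_le_of_monotone (monotone_sort f)).1 hf

end Tuple

lemma sortDesc_mono {N : ℕ} : Monotone (sortDesc (N := N)) :=
  fun _ _ h j => Tuple.comp_sort_mono h (Fin.rev j)

lemma sum_sortDesc {N : ℕ} (v : Fin N → ℝ) : ∑ j, sortDesc v j = ∑ i, v i :=
  Equiv.sum_comp (Fin.revPerm.trans (Tuple.sort v)) v

lemma sortDesc_strictMono {N : ℕ} : StrictMono (sortDesc (N := N)) := by
  intro y x hyx
  refine lt_of_le_of_ne (sortDesc_mono hyx.le) fun heq => ?_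
  have hsum : ∑ i, y i < ∑ i, x i := Fintype.sum_strictMono hyx
  rw [← sum_sortDesc y, ← sum_sortDesc x, heq] at hsum
  exact hsum.false

theorem pareto_of_lexMinimax_general {N : ℕ} (S : Set (Fin N → ℝ))
    (x : Fin N → ℝ)
    (hopt : ∀ y ∈ S, toLex (sortDesc x) ≤ toLex (sortDesc y)) :
    ¬ ∃ y ∈ S, (∀ n, y n ≤ x n) ∧ y ≠ x := by
  rintro ⟨y, hyS, hle, hne⟩
  have hlt : toLex (sortDesc y) < toLex (sortDesc x) :=
    Pi.toLex_strictMono (sortDesc_strictMono (lt_of_le_of_ne hle hne))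
  exact (hopt y hyS).not_gt hlt

/-- A lexicographically minimax optimal element of `S` is Pareto optimal in `S`. -/
theorem pareto_of_lexMinimax {N : ℕ} (hN : 1 ≤ N) (S : Set (Fin N → ℝ))
    (x : Fin N → ℝ) (hx : x ∈ S)
    (hopt : ∀ y ∈ S, toLex (sortDesc x) ≤ toLex (sortDesc y)) :
    ¬ ∃ y ∈ S, (∀ n, y n ≤ x n) ∧ y ≠ x :=
  pareto_of_lexMinimax_general S x hopt
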